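/- arXiv:1903.08720 — 2 statements merged into one kernel-verified Lean document; each statement's English description precedes it below -/
import Mathlib

section
/- Let F : ℝⁿ → ℝᵐ be continuously differentiable with Jacobian DF Lipschitz continuous with constant c₃, and let c₁ ∈ (0,1). Let A ∈ ℝ^{m×n}, w, s ∈ ℝⁿ with s the step, σ ∈ ℝᵐ with σ ≠ 0, and define y = F(w + s) − F(w), γ = DF(w + s)ᵀσ, ρ = y − A s, τ = γ − Aᵀσ. Assume σᵀρ ≠ 0 and that both skipping conditions hold: |τᵀs| ≥ c₁‖σ‖‖ρ‖ and |σᵀρ| ≥ c₁‖s‖‖τ‖. Then the adjoint TR1 update A⁺ = A + (1/(σᵀρ)) ρ τᵀ satisfies ‖y − A⁺ s‖ ≤ (c₃/c₁²) ‖s‖². -/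
open scoped RealInnerProductSpace Matrix Matrix.Norms.L2Operator

/-- Multiplication of a matrix with a vector, as a map between Euclidean spaces. -/
noncomputable def matVec {m n : ℕ} (A : Matrix (Fin m) (Fin n) ℝ)
    (v : EuclideanSpace ℝ (Fin n)) : EuclideanSpace ℝ (Fin m) :=
  Matrix.toEuclideanLin A v

/-- Outer product `u vᵀ` of two Euclidean vectors, as a matrix. -/
def outer {m n : ℕ} (u : EuclideanSpace ℝ (Fin m)) (v : EuclideanSpace ℝ (Fin n)) :
    Matrix (Fin m) (Fin n) ℝ :=
  Matrix.of fun i j => u i * v j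

/-!
The residual of the TR1 update is a multiple of `ρ`: `y − A⁺s = ((σᵀρ − τᵀs)/σᵀρ) ρ`, and the
numerator equals `σᵀ(y − DF(w + s) s)`, a first-order Taylor remainder of size at most
`c₃‖σ‖‖s‖²`. Chaining the two skipping conditions through Cauchy–Schwarz bounds the denominator
from below, `|σᵀρ| ≥ c₁ ‖s‖‖τ‖ ≥ c₁ |τᵀs| ≥ c₁² ‖σ‖‖ρ‖`, and the factor `‖σ‖‖ρ‖` cancels.
-/

theorem norm_image_add_sub_sub_le_of_lipschitz_fderiv {E F : Type*} [NormedAddCommGroup E]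
    [NormedSpace ℝ E] [NormedAddCommGroup F] [NormedSpace ℝ F] {f : E → F} {f' : E → E →L[ℝ] F} {L : ℝ}
    (hf : ∀ x, HasFDerivAt f (f' x) x) (hL : ∀ x y, ‖f' x - f' y‖ ≤ L * ‖x - y‖) (x h : E) :
    ‖f (x + h) - f x - f' (x + h) h‖ ≤ L * ‖h‖ ^ 2 := by
  have hLh : 0 ≤ L * ‖h‖ := by
    simpa using (norm_nonneg _).trans (hL (x + h) x)
  have bound : ∀ z ∈ segment ℝ x (x + h), ‖f' z - f' (x + h)‖ ≤ L * ‖h‖ := by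
    rw [segment_eq_image']
    rintro _ ⟨θ, ⟨hθ0, hθ1⟩, rfl⟩
    have hdist : x + θ • (x + h - x) - (x + h) = (1 - θ) • -h := by
      simp only [add_sub_cancel_left, smul_neg, sub_smul, one_smul]
      abel
    calc ‖f' _ - f' (x + h)‖ ≤ L * ‖x + θ • (x + h - x) - (x + h)‖ := hL _ _
      _ = (1 - θ) * (L * ‖h‖) := by
        rw [hdist, norm_smul, norm_neg, Real.norm_of_nonneg (by linarith)]; ring
      _ ≤ L * ‖h‖ := mul_le_of_le_one_left hLh (by linarith)
  have := (convex_segment x (x + h)).norm_image_sub_le_of_norm_hasFDerivWithin_le'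
    (fun z _ => (hf z).hasFDerivWithinAt) bound (left_mem_segment ℝ x (x + h))
    (right_mem_segment ℝ x (x + h))
  rwa [add_sub_cancel_left, mul_assoc, ← sq] at this

section Skipping

variable {E F : Type*} [NormedAddCommGroup E] [InnerProductSpace ℝ E]
  [NormedAddCommGroup F] [InnerProductSpace ℝ F]

theorem sq_mul_norm_mul_norm_le_abs_inner {c : ℝ} {σ ρ : F} {τ s : E} (hc : 0 ≤ c)
    (hskip1 : c * ‖σ‖ * ‖ρ‖ ≤ |⟪τ, s⟫|) (hskip2 : c * ‖s‖ * ‖τ‖ ≤ |⟪σ, ρ⟫|) :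
    c ^ 2 * (‖σ‖ * ‖ρ‖) ≤ |⟪σ, ρ⟫| :=
  calc c ^ 2 * (‖σ‖ * ‖ρ‖) = c * (c * ‖σ‖ * ‖ρ‖) := by ring
    _ ≤ c * (‖τ‖ * ‖s‖) :=
      mul_le_mul_of_nonneg_left (hskip1.trans (abs_real_inner_le_norm τ s)) hc
    _ = c * ‖s‖ * ‖τ‖ := by ring
    _ ≤ |⟪σ, ρ⟫| := hskip2

theorem abs_div_inner_mul_norm_le_of_skipping {c N K : ℝ} {σ ρ : F} {τ s : E} (hc : 0 < c)
    (hne : ⟪σ, ρ⟫ ≠ 0) (hskip1 : c * ‖σ‖ * ‖ρ‖ ≤ |⟪τ, s⟫|)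
    (hskip2 : c * ‖s‖ * ‖τ‖ ≤ |⟪σ, ρ⟫|) (hN : |N| ≤ ‖σ‖ * K) :
    |N / ⟪σ, ρ⟫| * ‖ρ‖ ≤ K / c ^ 2 := by
  have hden := sq_mul_norm_mul_norm_le_abs_inner hc.le hskip1 hskip2
  have hd : 0 < |⟪σ, ρ⟫| := abs_pos.mpr hne
  have hσρ : 0 < ‖σ‖ * ‖ρ‖ := hd.trans_le (abs_real_inner_le_norm σ ρ)
  have hK : 0 ≤ K := nonneg_of_mul_nonneg_right ((abs_nonneg N).trans hN)
    (pos_of_mul_pos_left hσρ (norm_nonneg ρ))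
  rw [abs_div, div_mul_eq_mul_div, div_le_div_iff₀ hd (by positivity)]
  calc |N| * ‖ρ‖ * c ^ 2 ≤ ‖σ‖ * K * ‖ρ‖ * c ^ 2 := by gcongr
    _ = K * (c ^ 2 * (‖σ‖ * ‖ρ‖)) := by ring
    _ ≤ K * |⟪σ, ρ⟫| := mul_le_mul_of_nonneg_left hden hK

end Skipping

section MatVec

variable {m n : ℕ}

theorem matVec_apply (A : Matrix (Fin m) (Fin n) ℝ) (v : EuclideanSpace ℝ (Fin n)) :
    matVec A v = WithLp.toLp 2 (A *ᵥ v.ofLp) := rfl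

theorem matVec_add_smul_outer (A : Matrix (Fin m) (Fin n) ℝ) (α : ℝ)
    (u : EuclideanSpace ℝ (Fin m)) (v x : EuclideanSpace ℝ (Fin n)) :
    matVec (A + α • outer u v) x = matVec A x + (α * ⟪v, x⟫) • u := by
  ext i
  simp only [outer, Matrix.smul_of, matVec_apply, Matrix.add_mulVec, WithLp.toLp_add,
    PiLp.add_apply, Matrix.mulVec, dotProduct, Matrix.of_apply, Pi.smul_apply, smul_eq_mul,
    PiLp.inner_apply, RCLike.inner_apply, Real.ringHom_apply, Finset.mul_sum, PiLp.smul_apply,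
    Finset.sum_mul, add_right_inj]
  exact Finset.sum_congr rfl fun j _ => by ring

theorem inner_matVec (A : Matrix (Fin m) (Fin n) ℝ) (σ : EuclideanSpace ℝ (Fin m))
    (s : EuclideanSpace ℝ (Fin n)) : ⟪σ, matVec A s⟫ = ⟪matVec Aᵀ σ, s⟫ := by
  simp only [matVec_apply, EuclideanSpace.inner_eq_star_dotProduct, star_trivial,
    Matrix.mulVec_transpose, Matrix.dotProduct_mulVec, dotProduct_comm]

theorem sub_matVec_add_smul_outer_residual (A : Matrix (Fin m) (Fin n) ℝ) (α : ℝ)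
    (y : EuclideanSpace ℝ (Fin m)) (τ s : EuclideanSpace ℝ (Fin n)) :
    y - matVec (A + α • outer (y - matVec A s) τ) s = (1 - α * ⟪τ, s⟫) • (y - matVec A s) := by
  rw [matVec_add_smul_outer, sub_smul, one_smul]
  abel

theorem inner_sub_inner_adjoint_residual (A B : Matrix (Fin m) (Fin n) ℝ)
    (σ y : EuclideanSpace ℝ (Fin m)) (s : EuclideanSpace ℝ (Fin n)) :
    ⟪σ, y - matVec A s⟫ - ⟪matVec Bᵀ σ - matVec Aᵀ σ, s⟫ = ⟪σ, y - matVec B s⟫ := by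
  simp only [inner_sub_left, inner_sub_right, inner_matVec]
  ring

end MatVec

theorem tr1_adjoint_one_step_bound_general {n m : ℕ} (c₁ c₃ : ℝ) (hc₁0 : 0 < c₁)
    (F : EuclideanSpace ℝ (Fin n) → EuclideanSpace ℝ (Fin m))
    (J : EuclideanSpace ℝ (Fin n) → Matrix (Fin m) (Fin n) ℝ)
    (hJ : ∀ w, HasFDerivAt F (LinearMap.toContinuousLinearMap (Matrix.toEuclideanLin (J w))) w)
    (hLip : ∀ w₁ w₂, ‖J w₁ - J w₂‖ ≤ c₃ * ‖w₁ - w₂‖)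
    (A : Matrix (Fin m) (Fin n) ℝ) (w s : EuclideanSpace ℝ (Fin n))
    (σ : EuclideanSpace ℝ (Fin m))
    (y : EuclideanSpace ℝ (Fin m)) (hy : y = F (w + s) - F w)
    (γ : EuclideanSpace ℝ (Fin n)) (hγ : γ = matVec (J (w + s))ᵀ σ)
    (ρ : EuclideanSpace ℝ (Fin m)) (hρ : ρ = y - matVec A s)
    (τ : EuclideanSpace ℝ (Fin n)) (hτ : τ = γ - matVec Aᵀ σ)
    (hne : ⟪σ, ρ⟫ ≠ 0)
    (hskip1 : c₁ * ‖σ‖ * ‖ρ‖ ≤ |⟪τ, s⟫|)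
    (hskip2 : c₁ * ‖s‖ * ‖τ‖ ≤ |⟪σ, ρ⟫|)
    (Aplus : Matrix (Fin m) (Fin n) ℝ)
    (hA : Aplus = A + (1 / ⟪σ, ρ⟫) • outer ρ τ) :
    ‖y - matVec Aplus s‖ ≤ (c₃ / c₁ ^ 2) * ‖s‖ ^ 2 := by
  have taylor : ‖y - matVec (J (w + s)) s‖ ≤ c₃ * ‖s‖ ^ 2 := by
    rw [hy]
    refine norm_image_add_sub_sub_le_of_lipschitz_fderiv hJ (fun w₁ w₂ => ?_) w s
    rw [← map_sub, ← map_sub]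
    exact hLip w₁ w₂
  have hnum : |⟪σ, ρ⟫ - ⟪τ, s⟫| ≤ ‖σ‖ * (c₃ * ‖s‖ ^ 2) := by
    rw [hρ, hτ, hγ, inner_sub_inner_adjoint_residual]
    exact (abs_real_inner_le_norm _ _).trans (mul_le_mul_of_nonneg_left taylor (norm_nonneg σ))
  have hres : y - matVec Aplus s = ((⟪σ, ρ⟫ - ⟪τ, s⟫) / ⟪σ, ρ⟫) • ρ := by
    rw [hA, hρ, sub_matVec_add_smul_outer_residual, ← hρ, sub_div, div_self hne, one_div_mul_eq_div]
  rw [hres, norm_smul, Real.norm_eq_abs, mul_comm_div, ← mul_div_assoc]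
  exact abs_div_inner_mul_norm_le_of_skipping hc₁0 hne hskip1 hskip2 hnum

/-- one-step bound `‖y − A⁺s‖ ≤ (c₃/c₁²)‖s‖²` for the adjoint TR1 update
under the two skipping conditions.  The Jacobian of `F` is the matrix `J w`, and its
Lipschitz continuity is with respect to the L2 operator norm on matrices. -/
theorem tr1_adjoint_one_step_bound {n m : ℕ} (c₁ c₃ : ℝ) (hc₁0 : 0 < c₁) (hc₁1 : c₁ < 1)
    (F : EuclideanSpace ℝ (Fin n) → EuclideanSpace ℝ (Fin m))
    (J : EuclideanSpace ℝ (Fin n) → Matrix (Fin m) (Fin n) ℝ)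
    (hJ : ∀ w, HasFDerivAt F (LinearMap.toContinuousLinearMap (Matrix.toEuclideanLin (J w))) w)
    (hLip : ∀ w₁ w₂, ‖J w₁ - J w₂‖ ≤ c₃ * ‖w₁ - w₂‖)
    (A : Matrix (Fin m) (Fin n) ℝ) (w s : EuclideanSpace ℝ (Fin n))
    (σ : EuclideanSpace ℝ (Fin m)) (hσ : σ ≠ 0)
    (y : EuclideanSpace ℝ (Fin m)) (hy : y = F (w + s) - F w)
    (γ : EuclideanSpace ℝ (Fin n)) (hγ : γ = matVec (J (w + s))ᵀ σ)
    (ρ : EuclideanSpace ℝ (Fin m)) (hρ : ρ = y - matVec A s)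
    (τ : EuclideanSpace ℝ (Fin n)) (hτ : τ = γ - matVec Aᵀ σ)
    (hne : ⟪σ, ρ⟫ ≠ 0)
    (hskip1 : c₁ * ‖σ‖ * ‖ρ‖ ≤ |⟪τ, s⟫|)
    (hskip2 : c₁ * ‖s‖ * ‖τ‖ ≤ |⟪σ, ρ⟫|)
    (Aplus : Matrix (Fin m) (Fin n) ℝ)
    (hA : Aplus = A + (1 / ⟪σ, ρ⟫) • outer ρ τ) :
    ‖y - matVec Aplus s‖ ≤ (c₃ / c₁ ^ 2) * ‖s‖ ^ 2 :=
  tr1_adjoint_one_step_bound_general c₁ c₃ hc₁0 F J hJ hLip A w s σ y hy γ hγ ρ hρ τ hτ hne hskip1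
    hskip2 Aplus hA
end

section
/- (Corollary 1, equality of asymptotic linear contraction rates.) Under the hypotheses of the spectrum-equality lemma — H, W symmetric real n×n, B, B̃ ∈ ℝ^{m×n}, P ∈ ℝ^{p×n} of full row rank, N ∈ ℝ^{n×(n−p)} with orthonormal columns and P N = 0, (B̃ − B) N = 0, and K̃ = [[H, B̃ᵀ, Pᵀ],[B̃, 0, 0],[P, 0, 0]], K_GN = [[H, Bᵀ, Pᵀ],[B, 0, 0],[P, 0, 0]], K = [[W, Bᵀ, Pᵀ],[B, 0, 0],[P, 0, 0]] with K̃ and K_GN invertible — the spectral radii of the two iteration matrices are equal: ρ(K̃⁻¹K − I) = ρ(K_GN⁻¹K − I). -/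
/-!
Since the columns of `N` span `ker P`, the hypothesis `(B̃ - B) N = 0` gives `B̃ - B = L P`.
The pencil `μ K̃ - K` is the saddle-point matrix with blocks `μ H - W`, `μ B̃ - B` and
`(μ - 1) P`, and for `μ ≠ 1` we can write
`μ B̃ - B = (μ B - B) + (μ / (μ - 1)) L · (μ - 1) P`; a unimodular block congruence removes
the second summand, so `det (μ K̃ - K) = det (μ K_GN - K)`.
An eigenvalue `z` of `K̃⁻¹ K - I` or `K_GN⁻¹ K - I` is a root `μ = z + 1` of the corresponding
pencil determinant, so the two iteration matrices have the same nonzero eigenvalues, and the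
eigenvalue `0` (that is, `μ = 1`) does not affect the spectral radius.
-/

open scoped Matrix

namespace Matrix

section Factorization

variable {K : Type*} [Field K] {ι m n κ : Type*} [Fintype ι] [Fintype n] [Fintype κ]

lemma range_mulVecLin_eq_ker_mulVecLin [DecidableEq κ] {P : Matrix ι n K} {N : Matrix n κ K}
    (hP : P.rank = Fintype.card ι) (hN : Nᵀ * N = 1) (hPN : P * N = 0)
    (hκ : Fintype.card κ = Fintype.card n - Fintype.card ι) :
    LinearMap.range N.mulVecLin = LinearMap.ker P.mulVecLin := by
  have hN_inj : Function.Injective N.mulVecLin := fun x y hxy => by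
    simpa [mulVec_mulVec, hN] using congrArg (Nᵀ *ᵥ ·) hxy
  refine Submodule.eq_of_le_of_finrank_le ?_ ?_
  · rintro _ ⟨y, rfl⟩
    simp [mulVec_mulVec, hPN]
  · have h := LinearMap.finrank_range_add_finrank_ker P.mulVecLin
    have hrank_le := P.rank_le_card_width
    rw [LinearMap.finrank_range_of_inj hN_inj]
    rw [← rank, hP, Module.finrank_fintype_fun_eq_card] at h
    rw [Module.finrank_fintype_fun_eq_card]
    omega

lemma exists_eq_mul_of_ker_le {P : Matrix ι n K} {D : Matrix m n K}
    (hP : P.rank = Fintype.card ι)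
    (hker : LinearMap.ker P.mulVecLin ≤ LinearMap.ker D.mulVecLin) :
    ∃ L : Matrix m ι K, D = L * P := by
  classical
  have hsurj : LinearMap.range P.mulVecLin = ⊤ :=
    Submodule.eq_top_of_finrank_eq (by rw [← rank, hP, Module.finrank_fintype_fun_eq_card])
  obtain ⟨g, hg⟩ := P.mulVecLin.exists_rightInverse_of_surjective hsurj
  refine ⟨LinearMap.toMatrix' (D.mulVecLin ∘ₗ g), toLin'.injective ?_⟩
  rw [toLin'_mul, toLin'_toMatrix', toLin'_apply', toLin'_apply']
  refine LinearMap.ext fun v => ?_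
  have hPg : P *ᵥ g (P *ᵥ v) = P *ᵥ v := congr($hg (P *ᵥ v))
  have hv : v - g (P *ᵥ v) ∈ LinearMap.ker P.mulVecLin := by simp [mulVec_sub, hPg]
  simpa [mulVec_sub, sub_eq_zero] using hker hv

lemma exists_eq_mul_of_mul_eq_zero [DecidableEq κ] {P : Matrix ι n K} {N : Matrix n κ K}
    {D : Matrix m n K} (hP : P.rank = Fintype.card ι) (hN : Nᵀ * N = 1) (hPN : P * N = 0)
    (hκ : Fintype.card κ = Fintype.card n - Fintype.card ι) (hDN : D * N = 0) :
    ∃ L : Matrix m ι K, D = L * P := by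
  refine exists_eq_mul_of_ker_le hP ?_
  rw [← range_mulVecLin_eq_ker_mulVecLin hP hN hPN hκ]
  rintro _ ⟨y, rfl⟩
  simp [mulVec_mulVec, hDN]

end Factorization

lemma map_nonsing_inv {K L n : Type*} [Field K] [Field L] [Fintype n] [DecidableEq n]
    (f : K →+* L) (A : Matrix n n K) : A⁻¹.map f = (A.map f)⁻¹ := by
  rw [inv_def, inv_def, Ring.inverse_eq_inv', Ring.inverse_eq_inv', map_smul', map_inv₀,
    f.map_det, ← f.mapMatrix_apply, f.map_adjugate]
  · rfl
  · exact map_mul f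

lemma map_nonsing_inv_mul_sub_one {K L n : Type*} [Field K] [Field L] [Fintype n] [DecidableEq n]
    (f : K →+* L) (M A : Matrix n n K) :
    (M⁻¹ * A - 1).map f = (M.map f)⁻¹ * A.map f - 1 := by
  change f.mapMatrix (M⁻¹ * A - 1) = _
  rw [map_sub, map_mul, map_one, RingHom.mapMatrix_apply, map_nonsing_inv]
  rfl

section KKT

variable {R : Type*} {n m p : Type*}

def kktMatrix [Zero R] (A : Matrix n n R) (C : Matrix m n R) (Q : Matrix p n R) :
    Matrix (n ⊕ (m ⊕ p)) (n ⊕ (m ⊕ p)) R :=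
  fromBlocks A (fromCols Cᵀ Qᵀ) (fromRows C Q) 0

lemma kktMatrix_map {S : Type*} [Zero R] [Zero S] (A : Matrix n n R) (C : Matrix m n R)
    (Q : Matrix p n R) {f : R → S} (hf : f 0 = 0) :
    (kktMatrix A C Q).map f = kktMatrix (A.map f) (C.map f) (Q.map f) := by
  simp only [kktMatrix, fromBlocks_map, fromCols_map, fromRows_map, transpose_map,
    Matrix.map_zero _ hf]

lemma smul_kktMatrix_sub_kktMatrix [Ring R] (μ : R) (A A' : Matrix n n R) (C C' : Matrix m n R)
    (Q : Matrix p n R) :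
    μ • kktMatrix A C Q - kktMatrix A' C' Q =
      kktMatrix (μ • A - A') (μ • C - C') ((μ - 1) • Q) := by
  ext (i | i | i) (j | j | j) <;> simp [kktMatrix, sub_mul]

variable [Fintype n] [Fintype m] [Fintype p] [DecidableEq n] [DecidableEq m] [DecidableEq p]

lemma det_kktMatrix_add_mul [CommRing R] (A : Matrix n n R) (C : Matrix m n R) (Q : Matrix p n R)
    (L : Matrix m p R) : (kktMatrix A (C + L * Q) Q).det = (kktMatrix A C Q).det := by
  -- a unimodular congruence adds `L` times the `Q`-rows to the `C`-rows, and likewise for columns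
  let G : Matrix (n ⊕ (m ⊕ p)) (n ⊕ (m ⊕ p)) R := fromBlocks 1 0 0 (fromBlocks 1 L 0 1)
  have hG : G.det = 1 := by simp [G, det_fromBlocks_zero₂₁]
  have hcongr : G * kktMatrix A C Q * Gᵀ = kktMatrix A (C + L * Q) Q := by
    simp [G, kktMatrix, fromBlocks_transpose, fromBlocks_multiply, fromBlocks_mul_fromRows,
      fromCols_mul_fromBlocks]
  rw [← hcongr, det_mul, det_mul, det_transpose, hG, one_mul, mul_one]

lemma det_smul_kktMatrix_sub_kktMatrix_of_sub_eq_mul [Field R] {A A' : Matrix n n R}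
    {C C' : Matrix m n R} {Q : Matrix p n R} {L : Matrix m p R} (hL : C' - C = L * Q)
    {μ : R} (hμ : μ ≠ 1) :
    (μ • kktMatrix A C' Q - kktMatrix A' C Q).det =
      (μ • kktMatrix A C Q - kktMatrix A' C Q).det := by
  have hμ' : μ - 1 ≠ 0 := sub_ne_zero.mpr hμ
  have hC : μ • C' - C = (μ • C - C) + (μ * (μ - 1)⁻¹) • L * ((μ - 1) • Q) := by
    rw [Matrix.smul_mul, Matrix.mul_smul, smul_smul, inv_mul_cancel_right₀ hμ', ← hL]
    module
  rw [smul_kktMatrix_sub_kktMatrix, smul_kktMatrix_sub_kktMatrix, hC, det_kktMatrix_add_mul]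

end KKT

section Spectrum

variable {K : Type*} [Field K] {n : Type*} [Fintype n] [DecidableEq n]

lemma mem_spectrum_nonsing_inv_mul_sub_one_iff {Q : Matrix n n K} (hQ : IsUnit Q)
    (A : Matrix n n K) (z : K) :
    z ∈ spectrum K (Q⁻¹ * A - 1) ↔ ((z + 1) • Q - A).det = 0 := by
  have hQdet : IsUnit Q.det := (isUnit_iff_isUnit_det Q).mp hQ
  have hfactor : algebraMap K _ z - (Q⁻¹ * A - 1) = Q⁻¹ * ((z + 1) • Q - A) := by
    rw [Algebra.algebraMap_eq_smul_one, Matrix.mul_sub, Matrix.mul_smul,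
      nonsing_inv_mul Q hQdet]
    module
  rw [spectrum.mem_iff, hfactor, isUnit_iff_isUnit_det, det_mul,
    (isUnit_nonsing_inv_det Q hQdet).mul_left_iff, isUnit_iff_ne_zero, not_not]

lemma spectrum_kktMatrix_sdiff_zero_eq {m p : Type*} [Fintype m] [Fintype p] [DecidableEq m]
    [DecidableEq p] {A A' : Matrix n n K} {C C' : Matrix m n K} {Q : Matrix p n K}
    {L : Matrix m p K} (hL : C' - C = L * Q) (hK' : IsUnit (kktMatrix A C' Q))
    (hK : IsUnit (kktMatrix A C Q)) :
    spectrum K ((kktMatrix A C' Q)⁻¹ * kktMatrix A' C Q - 1) \ {0} =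
      spectrum K ((kktMatrix A C Q)⁻¹ * kktMatrix A' C Q - 1) \ {0} := by
  ext z
  simp only [Set.mem_sdiff, Set.mem_singleton_iff, mem_spectrum_nonsing_inv_mul_sub_one_iff hK',
    mem_spectrum_nonsing_inv_mul_sub_one_iff hK]
  refine and_congr_left fun hz => ?_
  rw [det_smul_kktMatrix_sub_kktMatrix_of_sub_eq_mul hL (by simpa using hz)]

end Spectrum

end Matrix

lemma spectralRadius_le_of_spectrum_sdiff_zero_subset {𝕜 A : Type*} [NormedField 𝕜] [Ring A]
    [Algebra 𝕜 A] {a b : A} (h : spectrum 𝕜 a \ {0} ⊆ spectrum 𝕜 b) :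
    spectralRadius 𝕜 a ≤ spectralRadius 𝕜 b :=
  iSup₂_le fun k hk => by
    rcases eq_or_ne k 0 with rfl | hk0
    · simp
    · exact le_iSup₂ (f := fun k (_ : k ∈ spectrum 𝕜 b) => (‖k‖₊ : ENNReal)) k
        (h ⟨hk, hk0⟩)

lemma spectralRadius_eq_of_spectrum_sdiff_zero_eq {𝕜 A : Type*} [NormedField 𝕜] [Ring A]
    [Algebra 𝕜 A] {a b : A} (h : spectrum 𝕜 a \ {0} = spectrum 𝕜 b \ {0}) :
    spectralRadius 𝕜 a = spectralRadius 𝕜 b :=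
  le_antisymm (spectralRadius_le_of_spectrum_sdiff_zero_subset (h.subset.trans Set.sdiff_subset))
    (spectralRadius_le_of_spectrum_sdiff_zero_subset (h.symm.subset.trans Set.sdiff_subset))

theorem spectralRadius_iteration_matrix_eq_general {n m p : ℕ}
    (H W : Matrix (Fin n) (Fin n) ℝ)
    (B Bt : Matrix (Fin m) (Fin n) ℝ)
    (P : Matrix (Fin p) (Fin n) ℝ) (hP : P.rank = p)
    (N : Matrix (Fin n) (Fin (n - p)) ℝ) (hN : Nᵀ * N = 1) (hPN : P * N = 0)
    (hBN : (Bt - B) * N = 0)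
    (Kt Kgn K : Matrix (Fin n ⊕ (Fin m ⊕ Fin p)) (Fin n ⊕ (Fin m ⊕ Fin p)) ℝ)
    (hKt : Kt = Matrix.fromBlocks H (Matrix.fromCols Btᵀ Pᵀ) (Matrix.fromRows Bt P) 0)
    (hKgn : Kgn = Matrix.fromBlocks H (Matrix.fromCols Bᵀ Pᵀ) (Matrix.fromRows B P) 0)
    (hK : K = Matrix.fromBlocks W (Matrix.fromCols Bᵀ Pᵀ) (Matrix.fromRows B P) 0)
    (hKtinv : IsUnit Kt) (hKgninv : IsUnit Kgn) :
    spectralRadius ℂ ((Kt⁻¹ * K - 1).map (Complex.ofReal ·)) =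
      spectralRadius ℂ ((Kgn⁻¹ * K - 1).map (Complex.ofReal ·)) := by
  obtain ⟨L, hL⟩ := Matrix.exists_eq_mul_of_mul_eq_zero (by simpa using hP) hN hPN (by simp) hBN
  obtain rfl : Kt = Matrix.kktMatrix H Bt P := hKt
  obtain rfl : Kgn = Matrix.kktMatrix H B P := hKgn
  obtain rfl : K = Matrix.kktMatrix W B P := hK
  let f : ℝ →+* ℂ := Complex.ofRealHom
  have hLc : Bt.map f - B.map f = L.map f * P.map f := by
    rw [← Matrix.map_sub _ (map_sub f), ← Matrix.map_mul, hL]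
  have hunit {C : Matrix (Fin m) (Fin n) ℝ} (hC : IsUnit (Matrix.kktMatrix H C P)) :
      IsUnit (Matrix.kktMatrix (H.map f) (C.map f) (P.map f)) := by
    simpa [f.mapMatrix_apply, Matrix.kktMatrix_map] using hC.map f.mapMatrix
  rw [show (Complex.ofReal ·) = ⇑f from rfl]
  simp only [Matrix.map_nonsing_inv_mul_sub_one, Matrix.kktMatrix_map _ _ _ (map_zero f)]
  exact spectralRadius_eq_of_spectrum_sdiff_zero_eq
    (Matrix.spectrum_kktMatrix_sdiff_zero_eq hLc (hunit hKtinv) (hunit hKgninv))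

/-- Corollary 1: the asymptotic linear contraction rates (spectral radii
of the iteration matrices) of the block-TR1 based method and of the exact-Jacobian
Gauss-Newton method coincide. -/
theorem spectralRadius_iteration_matrix_eq {n m p : ℕ}
    (H W : Matrix (Fin n) (Fin n) ℝ) (hHsymm : H.IsSymm) (hWsymm : W.IsSymm)
    (B Bt : Matrix (Fin m) (Fin n) ℝ)
    (P : Matrix (Fin p) (Fin n) ℝ) (hP : P.rank = p)
    (N : Matrix (Fin n) (Fin (n - p)) ℝ) (hN : Nᵀ * N = 1) (hPN : P * N = 0)
    (hBN : (Bt - B) * N = 0)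
    (Kt Kgn K : Matrix (Fin n ⊕ (Fin m ⊕ Fin p)) (Fin n ⊕ (Fin m ⊕ Fin p)) ℝ)
    (hKt : Kt = Matrix.fromBlocks H (Matrix.fromCols Btᵀ Pᵀ) (Matrix.fromRows Bt P) 0)
    (hKgn : Kgn = Matrix.fromBlocks H (Matrix.fromCols Bᵀ Pᵀ) (Matrix.fromRows B P) 0)
    (hK : K = Matrix.fromBlocks W (Matrix.fromCols Bᵀ Pᵀ) (Matrix.fromRows B P) 0)
    (hKtinv : IsUnit Kt) (hKgninv : IsUnit Kgn) :
    spectralRadius ℂ ((Kt⁻¹ * K - 1).map (Complex.ofReal ·)) =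
      spectralRadius ℂ ((Kgn⁻¹ * K - 1).map (Complex.ofReal ·)) :=
  spectralRadius_iteration_matrix_eq_general H W B Bt P hP N hN hPN hBN Kt Kgn K hKt hKgn hK hKtinv
    hKgninv
end
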